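/- arXiv:math/0211236 — 2 statements merged into one kernel-verified Lean document; each statement's English description precedes it below -/
import Mathlib

section
/- Let (A,B,X,Y,(−,−),[−,−]) be a Morita context between m-regular quantales A and B. Define p : X⊗Y⊗X → X and q : Y⊗X⊗Y → Y as the sup-preserving extensions of p̃(x₁,y,x₂) = (x₁,y)·x₂ and q̃(y₁,x,y₂) = [y₁,x]·y₂. Then p and q are surjective and satisfy: (1) p(p(x₁⊗y₁⊗x₂)⊗y₂⊗x₃) = p(x₁⊗q(y₁⊗x₂⊗y₂)⊗x₃) = p(x₁⊗y₁⊗p(x₂⊗y₂⊗x₃)); (2) the symmetric identities for q; (3)-(6) the separation conditions p(−⊗x₁)=p(−⊗x₂) ⟹ x₁=x₂, p(x₁⊗−)=p(x₂⊗−) ⟹ x₁=x₂, and analogously for q. -/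
universe u

/-- The data of a Morita context between quantales `A` and `B` with
equivalence bimodules `X` and `Y`: multiplications, module actions and
pairings. -/
structure MoritaData (A B X Y : Type u) [CompleteLattice A] [CompleteLattice B]
    [CompleteLattice X] [CompleteLattice Y] where
  /-- multiplication of the quantale `A` -/
  mulA : A → A → A
  /-- multiplication of the quantale `B` -/
  mulB : B → B → B
  /-- left action of `A` on `X` -/
  actAX : A → X → X
  /-- right action of `B` on `X` -/
  actXB : X → B → X
  /-- left action of `B` on `Y` -/
  actBY : B → Y → Y
  /-- right action of `A` on `Y` -/
  actYA : Y → A → Y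
  /-- the pairing `(−,−) : X × Y → A` -/
  prA : X → Y → A
  /-- the pairing `[−,−] : Y × X → B` -/
  prB : Y → X → B

/-- The axioms of a Morita context between m-regular quantales. -/
structure IsMoritaContext {A B X Y : Type u} [CompleteLattice A] [CompleteLattice B]
    [CompleteLattice X] [CompleteLattice Y] (d : MoritaData A B X Y) : Prop where
  -- `A` and `B` are quantales:
  mulA_assoc : ∀ a b c, d.mulA (d.mulA a b) c = d.mulA a (d.mulA b c)
  sSup_mulA : ∀ (S : Set A) (a : A), d.mulA (sSup S) a = ⨆ b ∈ S, d.mulA b a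
  mulA_sSup : ∀ (a : A) (S : Set A), d.mulA a (sSup S) = ⨆ b ∈ S, d.mulA a b
  mulB_assoc : ∀ a b c, d.mulB (d.mulB a b) c = d.mulB a (d.mulB b c)
  sSup_mulB : ∀ (S : Set B) (b : B), d.mulB (sSup S) b = ⨆ c ∈ S, d.mulB c b
  mulB_sSup : ∀ (b : B) (S : Set B), d.mulB b (sSup S) = ⨆ c ∈ S, d.mulB b c
  -- `A` and `B` are m-regular:
  essA : ∀ a : A, ∃ S : Set (A × A), a = ⨆ t ∈ S, d.mulA t.1 t.2
  lsepA : ∀ a b : A, (∀ x, d.mulA a x = d.mulA b x) → a = b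
  rsepA : ∀ a b : A, (∀ x, d.mulA x a = d.mulA x b) → a = b
  essB : ∀ b : B, ∃ S : Set (B × B), b = ⨆ t ∈ S, d.mulB t.1 t.2
  lsepB : ∀ a b : B, (∀ x, d.mulB a x = d.mulB b x) → a = b
  rsepB : ∀ a b : B, (∀ x, d.mulB x a = d.mulB x b) → a = b
  -- `X` is an `A,B`-bimodule:
  actAX_mul : ∀ a a' x, d.actAX (d.mulA a a') x = d.actAX a (d.actAX a' x)
  sSup_actAX : ∀ (S : Set A) (x : X), d.actAX (sSup S) x = ⨆ a ∈ S, d.actAX a x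
  actAX_sSup : ∀ (a : A) (S : Set X), d.actAX a (sSup S) = ⨆ x ∈ S, d.actAX a x
  actXB_mul : ∀ x b b', d.actXB x (d.mulB b b') = d.actXB (d.actXB x b) b'
  sSup_actXB : ∀ (S : Set X) (b : B), d.actXB (sSup S) b = ⨆ x ∈ S, d.actXB x b
  actXB_sSup : ∀ (x : X) (S : Set B), d.actXB x (sSup S) = ⨆ b ∈ S, d.actXB x b
  commX : ∀ a x b, d.actXB (d.actAX a x) b = d.actAX a (d.actXB x b)
  -- `X` is m-regular:
  essXl : ∀ x : X, ∃ S : Set (A × X), x = ⨆ t ∈ S, d.actAX t.1 t.2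
  sepXl : ∀ x x' : X, (∀ a, d.actAX a x = d.actAX a x') → x = x'
  essXr : ∀ x : X, ∃ S : Set (X × B), x = ⨆ t ∈ S, d.actXB t.1 t.2
  sepXr : ∀ x x' : X, (∀ b, d.actXB x b = d.actXB x' b) → x = x'
  -- `Y` is a `B,A`-bimodule:
  actBY_mul : ∀ b b' y, d.actBY (d.mulB b b') y = d.actBY b (d.actBY b' y)
  sSup_actBY : ∀ (S : Set B) (y : Y), d.actBY (sSup S) y = ⨆ b ∈ S, d.actBY b y
  actBY_sSup : ∀ (b : B) (S : Set Y), d.actBY b (sSup S) = ⨆ y ∈ S, d.actBY b y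
  actYA_mul : ∀ y a a', d.actYA y (d.mulA a a') = d.actYA (d.actYA y a) a'
  sSup_actYA : ∀ (S : Set Y) (a : A), d.actYA (sSup S) a = ⨆ y ∈ S, d.actYA y a
  actYA_sSup : ∀ (y : Y) (S : Set A), d.actYA y (sSup S) = ⨆ a ∈ S, d.actYA y a
  commY : ∀ b y a, d.actYA (d.actBY b y) a = d.actBY b (d.actYA y a)
  -- `Y` is m-regular:
  essYl : ∀ y : Y, ∃ S : Set (B × Y), y = ⨆ t ∈ S, d.actBY t.1 t.2
  sepYl : ∀ y y' : Y, (∀ b, d.actBY b y = d.actBY b y') → y = y'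
  essYr : ∀ y : Y, ∃ S : Set (Y × A), y = ⨆ t ∈ S, d.actYA t.1 t.2
  sepYr : ∀ y y' : Y, (∀ a, d.actYA y a = d.actYA y' a) → y = y'
  -- the pairings are sup-preserving in each variable:
  sSup_prA : ∀ (S : Set X) (y : Y), d.prA (sSup S) y = ⨆ x ∈ S, d.prA x y
  prA_sSup : ∀ (x : X) (S : Set Y), d.prA x (sSup S) = ⨆ y ∈ S, d.prA x y
  sSup_prB : ∀ (S : Set Y) (x : X), d.prB (sSup S) x = ⨆ y ∈ S, d.prB y x
  prB_sSup : ∀ (y : Y) (S : Set X), d.prB y (sSup S) = ⨆ x ∈ S, d.prB y x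
  -- the pairings are bimodule maps:
  prA_actA : ∀ a x y, d.prA (d.actAX a x) y = d.mulA a (d.prA x y)
  prA_actY : ∀ x y a, d.prA x (d.actYA y a) = d.mulA (d.prA x y) a
  prB_actB : ∀ b y x, d.prB (d.actBY b y) x = d.mulB b (d.prB y x)
  prB_actX : ∀ y x b, d.prB y (d.actXB x b) = d.mulB (d.prB y x) b
  -- the pairings are balanced:
  prA_bal : ∀ x b y, d.prA (d.actXB x b) y = d.prA x (d.actBY b y)
  prB_bal : ∀ y a x, d.prB (d.actYA y a) x = d.prB y (d.actAX a x)
  -- the linking identities: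
  link₁ : ∀ x₁ y x₂, d.actAX (d.prA x₁ y) x₂ = d.actXB x₁ (d.prB y x₂)
  link₂ : ∀ y₁ x y₂, d.actBY (d.prB y₁ x) y₂ = d.actYA y₁ (d.prA x y₂)
  -- the induced maps `X ⊗ Y → A` and `Y ⊗ X → B` are surjective:
  surjA : ∀ a : A, ∃ S : Set (X × Y), a = ⨆ t ∈ S, d.prA t.1 t.2
  surjB : ∀ b : B, ∃ S : Set (Y × X), b = ⨆ t ∈ S, d.prB t.1 t.2

/-!
Every `x : X` is a join of elements `a · x'` (essentiality), and every `a : A` is a join of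
pairings `(x₁, y)`; as the action distributes over joins in `a`, `x` is a join of elements
`(x₁, y) · x'`. Dually, two sup-preserving maps out of `A` that agree on all pairings agree
everywhere, so separation of the actions yields (3) and (5) directly, and (4) and (6) after
the linking identities move the pairing to the other side. Conditions (1) and (2) are the
module laws combined with the linking identities.
-/

section SupGenerators

variable {α β γ δ ε : Type*} [CompleteLattice α] [CompleteLattice γ]

theorem map_biSup_of_map_sSup {ι : Type*} {f : α → γ}
    (hf : ∀ S : Set α, f (sSup S) = ⨆ a ∈ S, f a) (S : Set ι) (g : ι → α) :
    f (⨆ i ∈ S, g i) = ⨆ i ∈ S, f (g i) := by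
  rw [← sSup_image, hf, iSup_image]

theorem eq_of_eqOn_sup_generators {f f' : α → γ}
    (hf : ∀ S : Set α, f (sSup S) = ⨆ a ∈ S, f a)
    (hf' : ∀ S : Set α, f' (sSup S) = ⨆ a ∈ S, f' a)
    {g : δ → ε → α} (hg : ∀ a, ∃ T : Set (δ × ε), a = ⨆ u ∈ T, g u.1 u.2)
    (h : ∀ u v, f (g u v) = f' (g u v)) (a : α) : f a = f' a := by
  obtain ⟨T, rfl⟩ := hg a
  rw [map_biSup_of_map_sSup hf, map_biSup_of_map_sSup hf']
  exact biSup_congr fun u _ => h u.1 u.2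

theorem exists_eq_biSup_act_of_sup_generators (act : α → β → γ)
    (hact : ∀ (S : Set α) (b : β), act (sSup S) b = ⨆ a ∈ S, act a b)
    {g : δ → ε → α} (hg : ∀ a, ∃ T : Set (δ × ε), a = ⨆ u ∈ T, g u.1 u.2)
    {c : γ} (hc : ∃ S : Set (α × β), c = ⨆ s ∈ S, act s.1 s.2) :
    ∃ S : Set (δ × ε × β), c = ⨆ t ∈ S, act (g t.1 t.2.1) t.2.2 := by
  choose T hT using hg
  obtain ⟨S, rfl⟩ := hc
  refine ⟨⋃ s ∈ S, (fun u => (u.1, u.2, s.2)) '' T s.1, ?_⟩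
  simp only [iSup_iUnion, iSup_image]
  exact biSup_congr fun s _ => (congrArg (act · s.2) (hT s.1)).trans
    (map_biSup_of_map_sSup (f := (act · s.2)) (hact · s.2) _ _)

end SupGenerators

/-- given a Morita context `(A,B,X,Y,(−,−),[−,−])` between
m-regular quantales, the maps `p(x₁⊗y⊗x₂) = (x₁,y)·x₂` and
`q(y₁⊗x⊗y₂) = [y₁,x]·y₂` are surjective and satisfy conditions (1)-(6). -/
theorem conditions_of_morita_context {A B X Y : Type u}
    [CompleteLattice A] [CompleteLattice B] [CompleteLattice X] [CompleteLattice Y]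
    (d : MoritaData A B X Y) (hd : IsMoritaContext d) :
    -- `p` is surjective:
    (∀ x : X, ∃ S : Set (X × Y × X),
      x = ⨆ t ∈ S, d.actAX (d.prA t.1 t.2.1) t.2.2) ∧
    -- `q` is surjective:
    (∀ y : Y, ∃ S : Set (Y × X × Y),
      y = ⨆ t ∈ S, d.actBY (d.prB t.1 t.2.1) t.2.2) ∧
    -- condition (1):
    (∀ (x₁ x₂ x₃ : X) (y₁ y₂ : Y),
      d.actAX (d.prA (d.actAX (d.prA x₁ y₁) x₂) y₂) x₃ =
        d.actAX (d.prA x₁ (d.actBY (d.prB y₁ x₂) y₂)) x₃ ∧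
      d.actAX (d.prA (d.actAX (d.prA x₁ y₁) x₂) y₂) x₃ =
        d.actAX (d.prA x₁ y₁) (d.actAX (d.prA x₂ y₂) x₃)) ∧
    -- condition (2):
    (∀ (y₁ y₂ y₃ : Y) (x₁ x₂ : X),
      d.actBY (d.prB (d.actBY (d.prB y₁ x₁) y₂) x₂) y₃ =
        d.actBY (d.prB y₁ (d.actAX (d.prA x₁ y₂) x₂)) y₃ ∧
      d.actBY (d.prB (d.actBY (d.prB y₁ x₁) y₂) x₂) y₃ =
        d.actBY (d.prB y₁ x₁) (d.actBY (d.prB y₂ x₂) y₃)) ∧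
    -- condition (3):
    (∀ x₁ x₂ : X,
      (∀ (x : X) (y : Y), d.actAX (d.prA x y) x₁ = d.actAX (d.prA x y) x₂) →
      x₁ = x₂) ∧
    -- condition (4):
    (∀ x₁ x₂ : X,
      (∀ (y : Y) (x : X), d.actAX (d.prA x₁ y) x = d.actAX (d.prA x₂ y) x) →
      x₁ = x₂) ∧
    -- condition (5):
    (∀ y₁ y₂ : Y,
      (∀ (y : Y) (x : X), d.actBY (d.prB y x) y₁ = d.actBY (d.prB y x) y₂) →
      y₁ = y₂) ∧
    -- condition (6):
    (∀ y₁ y₂ : Y,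
      (∀ (x : X) (y : Y), d.actBY (d.prB y₁ x) y = d.actBY (d.prB y₂ x) y) →
      y₁ = y₂) := by
  exact ⟨fun x => exists_eq_biSup_act_of_sup_generators d.actAX hd.sSup_actAX hd.surjA
      (hd.essXl x),
    fun y => exists_eq_biSup_act_of_sup_generators d.actBY hd.sSup_actBY hd.surjB
      (hd.essYl y),
    fun x₁ x₂ x₃ y₁ y₂ => ⟨by rw [hd.prA_actA, hd.link₂, hd.prA_actY],
      by rw [hd.prA_actA, hd.actAX_mul]⟩,
    fun y₁ y₂ y₃ x₁ x₂ => ⟨by rw [hd.prB_actB, hd.link₁, hd.prB_actX],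
      by rw [hd.prB_actB, hd.actBY_mul]⟩,
    fun x₁ x₂ h => hd.sepXl x₁ x₂ <|
      eq_of_eqOn_sup_generators (hd.sSup_actAX · x₁) (hd.sSup_actAX · x₂) hd.surjA h,
    fun x₁ x₂ h => hd.sepXr x₁ x₂ <|
      eq_of_eqOn_sup_generators (hd.actXB_sSup x₁) (hd.actXB_sSup x₂) hd.surjB
        fun y x => by simpa only [hd.link₁] using h y x,
    fun y₁ y₂ h => hd.sepYl y₁ y₂ <|
      eq_of_eqOn_sup_generators (hd.sSup_actBY · y₁) (hd.sSup_actBY · y₂) hd.surjB h,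
    fun y₁ y₂ h => hd.sepYr y₁ y₂ <|
      eq_of_eqOn_sup_generators (hd.actYA_sSup y₁) (hd.actYA_sSup y₂) hd.surjA
        fun x y => by simpa only [hd.link₂] using h x y⟩
end

section
/- Let X and Y be complete lattices with surjective sup-preserving maps p : X⊗Y⊗X → X and q : Y⊗X⊗Y → Y satisfying the six conditions of the Morita pair characterization. Then the pairings (x,y) = L_{x⊗y} ∈ L and [y,x] = R_{y⊗x} ∈ R are balanced: (x·R_b, y) = (x, R_b·y) and [y·L_a, x] = [y, L_a·x] for all a ∈ X⊗Y, b ∈ Y⊗X, x ∈ X, y ∈ Y, where the actions are L_a·x = p(a⊗x), x·R_b = p(x⊗b), R_b·y = q(b⊗y), y·L_a = q(y⊗a). -/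
/-- A map encoded, via the universal property of the sup-lattice tensor product,
as a map preserving arbitrary joins in each variable. -/
def TriSupPreserving {α β γ δ : Type*} [CompleteLattice α] [CompleteLattice β]
    [CompleteLattice γ] [CompleteLattice δ] (p : α → β → γ → δ) : Prop :=
  (∀ (S : Set α) (y : β) (z : γ), p (sSup S) y z = ⨆ x ∈ S, p x y z) ∧
  (∀ (x : α) (S : Set β) (z : γ), p x (sSup S) z = ⨆ y ∈ S, p x y z) ∧
  (∀ (x : α) (y : β) (S : Set γ), p x y (sSup S) = ⨆ z ∈ S, p x y z)

/-!
Both identities are instances of the associativity laws `c1a` and `c2a` on simple tensors;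
since `p` and `q` preserve joins in their first two arguments, they extend to arbitrary
joins of simple tensors.
-/

namespace TriSupPreserving

variable {α β γ δ ι : Type*} [CompleteLattice α] [CompleteLattice β] [CompleteLattice γ]
  [CompleteLattice δ] {p : α → β → γ → δ}

theorem map_biSup_left (hp : TriSupPreserving p) (g : ι → α) (T : Set ι) (y : β) (z : γ) :
    p (⨆ i ∈ T, g i) y z = ⨆ i ∈ T, p (g i) y z := by
  rw [← sSup_image, hp.1, iSup_image]

theorem map_biSup_mid (hp : TriSupPreserving p) (x : α) (g : ι → β) (T : Set ι) (z : γ) :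
    p x (⨆ i ∈ T, g i) z = ⨆ i ∈ T, p x (g i) z := by
  rw [← sSup_image, hp.2.1, iSup_image]

end TriSupPreserving

theorem pairings_balanced_general {X Y : Type*} [CompleteLattice X] [CompleteLattice Y]
    (p : X → Y → X → X) (q : Y → X → Y → Y)
    (hp : TriSupPreserving p) (hq : TriSupPreserving q)
    (c1a : ∀ (x₁ x₂ x₃ : X) (y₁ y₂ : Y),
      p (p x₁ y₁ x₂) y₂ x₃ = p x₁ (q y₁ x₂ y₂) x₃)
    (c2a : ∀ (y₁ y₂ y₃ : Y) (x₁ x₂ : X),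
      q (q y₁ x₁ y₂) x₂ y₃ = q y₁ (p x₁ y₂ x₂) y₃) :
    -- `(x·R_b, y) = (x, R_b·y)`:
    (∀ (x : X) (y : Y) (T : Set (Y × X)) (z : X),
      p (⨆ t ∈ T, p x t.1 t.2) y z = p x (⨆ t ∈ T, q t.1 t.2 y) z) ∧
    -- `[y·L_a, x] = [y, L_a·x]`:
    (∀ (y : Y) (x : X) (S : Set (X × Y)) (w : Y),
      q (⨆ s ∈ S, q y s.1 s.2) x w = q y (⨆ s ∈ S, p s.1 s.2 x) w) := by
  refine ⟨fun x y T z => ?_, fun y x S w => ?_⟩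
  · rw [hp.map_biSup_left, hp.map_biSup_mid]
    simp only [c1a]
  · rw [hq.map_biSup_left, hq.map_biSup_mid]
    simp only [c2a]

/-- the pairings `(x,y) = L_{x⊗y}` and `[y,x] = R_{y⊗x}` are
balanced: `(x·R_b, y) = (x, R_b·y)` and `[y·L_a, x] = [y, L_a·x]` for all
`a ∈ X⊗Y` and `b ∈ Y⊗X` (represented by sets `S : Set (X × Y)`,
`T : Set (Y × X)` of simple tensors), where the actions are
`L_a·x = p(a⊗x)`, `x·R_b = p(x⊗b)`, `R_b·y = q(b⊗y)`, `y·L_a = q(y⊗a)`,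
and the pairings are compared as operators (evaluated at every point). -/
theorem pairings_balanced {X Y : Type*} [CompleteLattice X] [CompleteLattice Y]
    (p : X → Y → X → X) (q : Y → X → Y → Y)
    (hp : TriSupPreserving p) (hq : TriSupPreserving q)
    (psurj : ∀ x : X, ∃ S : Set (X × Y × X), x = ⨆ t ∈ S, p t.1 t.2.1 t.2.2)
    (qsurj : ∀ y : Y, ∃ S : Set (Y × X × Y), y = ⨆ t ∈ S, q t.1 t.2.1 t.2.2)
    (c1a : ∀ (x₁ x₂ x₃ : X) (y₁ y₂ : Y),
      p (p x₁ y₁ x₂) y₂ x₃ = p x₁ (q y₁ x₂ y₂) x₃)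
    (c1b : ∀ (x₁ x₂ x₃ : X) (y₁ y₂ : Y),
      p (p x₁ y₁ x₂) y₂ x₃ = p x₁ y₁ (p x₂ y₂ x₃))
    (c2a : ∀ (y₁ y₂ y₃ : Y) (x₁ x₂ : X),
      q (q y₁ x₁ y₂) x₂ y₃ = q y₁ (p x₁ y₂ x₂) y₃)
    (c2b : ∀ (y₁ y₂ y₃ : Y) (x₁ x₂ : X),
      q (q y₁ x₁ y₂) x₂ y₃ = q y₁ x₁ (q y₂ x₂ y₃))
    (c3 : ∀ x₁ x₂ : X, (∀ (x : X) (y : Y), p x y x₁ = p x y x₂) → x₁ = x₂)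
    (c4 : ∀ x₁ x₂ : X, (∀ (y : Y) (x : X), p x₁ y x = p x₂ y x) → x₁ = x₂)
    (c5 : ∀ y₁ y₂ : Y, (∀ (y : Y) (x : X), q y x y₁ = q y x y₂) → y₁ = y₂)
    (c6 : ∀ y₁ y₂ : Y, (∀ (x : X) (y : Y), q y₁ x y = q y₂ x y) → y₁ = y₂) :
    -- `(x·R_b, y) = (x, R_b·y)`:
    (∀ (x : X) (y : Y) (T : Set (Y × X)) (z : X),
      p (⨆ t ∈ T, p x t.1 t.2) y z = p x (⨆ t ∈ T, q t.1 t.2 y) z) ∧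
    -- `[y·L_a, x] = [y, L_a·x]`:
    (∀ (y : Y) (x : X) (S : Set (X × Y)) (w : Y),
      q (⨆ s ∈ S, q y s.1 s.2) x w = q y (⨆ s ∈ S, p s.1 s.2 x) w) :=
  pairings_balanced_general p q hp hq c1a c2a
end
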